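/- arXiv:2309.06785 — 8 statements merged into one kernel-verified Lean document; each statement's English description precedes it below -/
import Mathlib

section
/- Merson's Lemma: Let G be a group with two group topologies γ₁ ⊆ γ (not necessarily Hausdorff) and let H be a subgroup of G. If γ₁ and γ induce the same subspace topology on H and the same quotient topology on the coset space G/H, then γ₁ = γ. -/
open Topology

/-- Subspace topology induced on a subgroup `H` by a topology `t` on `G`. -/
def subTop {G : Type*} [Group G] (t : TopologicalSpace G) (H : Subgroup G) :
    TopologicalSpace H :=
  t.induced ((↑) : H → G)

/-- Quotient topology on the coset space `G ⧸ H` induced by a topology `t` on `G`. -/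
def quotTop {G : Type*} [Group G] (t : TopologicalSpace G) (H : Subgroup G) :
    TopologicalSpace (G ⧸ H) :=
  t.coinduced (QuotientGroup.mk : G → G ⧸ H)

/-- `H` is a key subgroup of `(G, γ)`: every coarser Hausdorff group topology `γ₁`
(`γ ≤ γ₁` in Mathlib's order means `γ₁` is coarser than `γ`) inducing the original
subspace topology on `H` coincides with `γ`. -/
def IsKey {G : Type*} [Group G] (γ : TopologicalSpace G) (H : Subgroup G) : Prop :=
  ∀ γ₁ : TopologicalSpace G, γ ≤ γ₁ → @IsTopologicalGroup G γ₁ _ → @T2Space G γ₁ →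
    subTop γ₁ H = subTop γ H → γ₁ = γ

/-- `H` is a co-key subgroup of `(G, γ)`: every coarser Hausdorff group topology `γ₁`
inducing the original quotient topology on `G ⧸ H` coincides with `γ`. -/
def IsCoKey {G : Type*} [Group G] (γ : TopologicalSpace G) (H : Subgroup G) : Prop :=
  ∀ γ₁ : TopologicalSpace G, γ ≤ γ₁ → @IsTopologicalGroup G γ₁ _ → @T2Space G γ₁ →
    quotTop γ₁ H = quotTop γ H → γ₁ = γ

/-- `H` is relatively minimal in `(G, γ)`: every coarser Hausdorff group topology on `G`
induces the original subspace topology on `H`. -/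
def IsRelMin {G : Type*} [Group G] (γ : TopologicalSpace G) (H : Subgroup G) : Prop :=
  ∀ γ₁ : TopologicalSpace G, γ ≤ γ₁ → @IsTopologicalGroup G γ₁ _ → @T2Space G γ₁ →
    subTop γ₁ H = subTop γ H

/-- `H` is co-minimal in `(G, γ)`: every coarser Hausdorff group topology on `G`
induces the original quotient topology on the coset space `G ⧸ H`. -/
def IsCoMin {G : Type*} [Group G] (γ : TopologicalSpace G) (H : Subgroup G) : Prop :=
  ∀ γ₁ : TopologicalSpace G, γ ≤ γ₁ → @IsTopologicalGroup G γ₁ _ → @T2Space G γ₁ →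
    quotTop γ₁ H = quotTop γ H

/-- `(X, γ)` is a minimal topological group: no strictly coarser Hausdorff group topology. -/
def IsMinimalGroup {X : Type*} [Group X] (γ : TopologicalSpace X) : Prop :=
  ∀ γ₁ : TopologicalSpace X, γ ≤ γ₁ → @IsTopologicalGroup X γ₁ _ → @T2Space X γ₁ → γ₁ = γ

/-!
Since both are group topologies, it suffices to show that every `γ`-neighbourhood `U` of `1` is a
`γ₁`-neighbourhood. Take a `γ`-open `V ∋ 1` with `V * V ⊆ U`, a `γ₁`-open `O` with
`H ∩ O = H ∩ V`, and a `γ₁`-open `W ∋ 1` with `W⁻¹ * W ⊆ O`. The set `(V ∩ W) * H` is `γ`-open and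
a union of cosets of `H`, so its image in `G ⧸ H` is open for the common quotient topology and it
is `γ₁`-open. Finally `W ∩ (V ∩ W) * H ⊆ V * V`: if `a * h ∈ W` with `a ∈ V ∩ W` and `h ∈ H`, then
`h = a⁻¹ * (a * h) ∈ H ∩ W⁻¹ * W ⊆ H ∩ O ⊆ V`.
-/

open scoped Pointwise

open Set

theorem exists_isOpen_one_mem_inv_mul_subset {G : Type*} [Group G] [TopologicalSpace G]
    [IsTopologicalGroup G] {O : Set G} (hO : O ∈ 𝓝 (1 : G)) :
    ∃ W : Set G, IsOpen W ∧ (1 : G) ∈ W ∧ W⁻¹ * W ⊆ O := by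
  obtain ⟨P, hP, hP1, hPP⟩ := exists_open_nhds_one_mul_subset hO
  refine ⟨P ∩ P⁻¹, hP.inter hP.inv, ⟨hP1, by simpa using hP1⟩, ?_⟩
  calc (P ∩ P⁻¹)⁻¹ * (P ∩ P⁻¹) ⊆ P * P := by
        rw [inter_inv, inv_inv]
        exact mul_subset_mul inter_subset_right inter_subset_left
    _ ⊆ O := hPP

theorem inter_mul_subgroup_subset_mul {G : Type*} [Group G] {H : Subgroup G} {V O W : Set G}
    (hWO : W⁻¹ * W ⊆ O) (hOV : (H : Set G) ∩ O ⊆ V) : W ∩ ((V ∩ W) * H) ⊆ V * V := by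
  rintro _ ⟨hx, a, ⟨haV, haW⟩, h, hh, rfl⟩
  have hhO : h ∈ O := hWO ⟨a⁻¹, inv_mem_inv.2 haW, a * h, hx, by group⟩
  exact ⟨a, haV, h, hOV ⟨hh, hhO⟩, rfl⟩

section TwoTopologies

variable {G : Type*} [Group G] {γ γ₁ : TopologicalSpace G} {H : Subgroup G}

theorem exists_isOpen_inter_eq_of_subTop_eq (hsub : subTop γ₁ H = subTop γ H) {V : Set G}
    (hV : IsOpen[γ] V) : ∃ O : Set G, IsOpen[γ₁] O ∧ (H : Set G) ∩ O = (H : Set G) ∩ V := by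
  have hVH : IsOpen[subTop γ H] (((↑) : H → G) ⁻¹' V) := ⟨V, hV, rfl⟩
  obtain ⟨O, hO, hOV⟩ : IsOpen[subTop γ₁ H] (((↑) : H → G) ⁻¹' V) := hsub ▸ hVH
  exact ⟨O, hO, Subtype.preimage_coe_eq_preimage_coe_iff.1 hOV⟩

theorem isOpen_mul_subgroup_of_quotTop_eq (hγ : @IsTopologicalGroup G γ _)
    (hquot : quotTop γ₁ H = quotTop γ H) {s : Set G} (hs : IsOpen[γ] s) :
    IsOpen[γ₁] (s * H) := by
  have hs' : IsOpen[quotTop γ H] (QuotientGroup.mk '' s : Set (G ⧸ H)) := by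
    rw [quotTop, isOpen_coinduced, QuotientGroup.preimage_image_mk_eq_mul]
    exact @IsOpen.mul_right G γ _ _ s H hs
  rwa [← hquot, quotTop, isOpen_coinduced, QuotientGroup.preimage_image_mk_eq_mul] at hs'

theorem nhds_one_le_of_subTop_eq_of_quotTop_eq (hγ : @IsTopologicalGroup G γ _)
    (hγ₁ : @IsTopologicalGroup G γ₁ _) (hle : γ ≤ γ₁) (hsub : subTop γ₁ H = subTop γ H)
    (hquot : quotTop γ₁ H = quotTop γ H) : @nhds G γ₁ 1 ≤ @nhds G γ 1 := by
  intro U hU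
  obtain ⟨V, hV, hV1, hVU⟩ := @exists_open_nhds_one_mul_subset G γ _ _ U hU
  obtain ⟨O, hO, hOV⟩ := exists_isOpen_inter_eq_of_subTop_eq hsub hV
  have hO1 : (1 : G) ∈ O := (hOV.symm.subset ⟨H.one_mem, hV1⟩).2
  obtain ⟨W, hW, hW1, hWO⟩ :=
    @exists_isOpen_one_mem_inv_mul_subset G _ γ₁ hγ₁ O (@IsOpen.mem_nhds G γ₁ _ _ hO hO1)
  have hAH : IsOpen[γ₁] ((V ∩ W) * H) :=
    isOpen_mul_subgroup_of_quotTop_eq hγ hquot (@IsOpen.inter G γ _ _ hV (hW.mono hle))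
  have h1 : (1 : G) ∈ W ∩ ((V ∩ W) * H) := ⟨hW1, 1, ⟨hV1, hW1⟩, 1, H.one_mem, one_mul 1⟩
  exact Filter.mem_of_superset (@IsOpen.mem_nhds G γ₁ _ _ (hW.inter hAH) h1)
    ((inter_mul_subgroup_subset_mul hWO (hOV.subset.trans inter_subset_right)).trans hVU)

end TwoTopologies

/-- Merson's Lemma: if `γ₁ ⊆ γ` are (not necessarily Hausdorff) group topologies on `G`
inducing the same subspace topology on a subgroup `H` and the same quotient topology
on `G ⧸ H`, then `γ₁ = γ`. -/
theorem merson_lemma {G : Type*} [Group G] (γ γ₁ : TopologicalSpace G) (H : Subgroup G)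
    (hγ : @IsTopologicalGroup G γ _) (hγ₁ : @IsTopologicalGroup G γ₁ _)
    (hle : γ ≤ γ₁)
    (hsub : subTop γ₁ H = subTop γ H)
    (hquot : quotTop γ₁ H = quotTop γ H) :
    γ₁ = γ :=
  IsTopologicalGroup.ext hγ₁ hγ
    ((nhds_one_le_of_subTop_eq_of_quotTop_eq hγ hγ₁ hle hsub hquot).antisymm (nhds_mono hle))
end

section
/- A Hausdorff topological group G is minimal if and only if its center Z(G) is both minimal (in the subspace topology) and a key subgroup of G. -/
/-!
Let `Z` be a closed central subgroup of a minimal group `G` and `τ` a coarser Hausdorff group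
topology on `Z`. The quotient of `G × (Z, τ)` by the antidiagonal `{(z⁻¹, z)}` is algebraically
`G`, and it is a Hausdorff topological group because the antidiagonal is closed (the graph of the
inclusion is closed, `Z` being closed and `τ` coarser than the subspace topology). Its topology is
coarser than that of `G`, so by minimality it is the topology of `G`; hence the inclusion
`(Z, τ) → G` is continuous and `τ` is the subspace topology. The center of a Hausdorff group is
closed, which gives one direction; the other is immediate from the definitions.
-/

open Topology

namespace MonoidHom

variable {G A : Type*} [Group G] [Group A] (ι : A →* G) (hι : ∀ g a, Commute g (ι a))

def toCentralProduct : G →* (G × A) ⧸ ((MonoidHom.id G).noncommCoprod ι hι).ker :=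
  (QuotientGroup.mk' _).comp (MonoidHom.inl G A)

lemma toCentralProduct_injective : Function.Injective (toCentralProduct ι hι) := by
  refine (injective_iff_map_eq_one _).2 fun g hg => ?_
  simpa [toCentralProduct, QuotientGroup.eq_one_iff] using hg

lemma toCentralProduct_apply_map (a : A) :
    toCentralProduct ι hι (ι a) = QuotientGroup.mk (1, a) := by
  simp [toCentralProduct, QuotientGroup.eq]

variable [TopologicalSpace G] [TopologicalSpace A]

/-- The quotient topology of `G × A` modulo the antidiagonal `{(ι a⁻¹, a)}`, transported to `G`:
its neighbourhoods of `1` are the products `U * ι '' V`. -/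
@[reducible]
def centralProductTopology : TopologicalSpace G :=
  .induced (toCentralProduct ι hι) (QuotientGroup.instTopologicalSpace _)

lemma le_centralProductTopology : ‹TopologicalSpace G› ≤ centralProductTopology ι hι :=
  continuous_iff_le_induced.1 <| continuous_quot_mk.comp (continuous_id.prodMk continuous_const)

lemma continuous_centralProductTopology : Continuous[_, centralProductTopology ι hι] ι := by
  refine continuous_induced_rng.2 ?_
  simp only [Function.comp_def, toCentralProduct_apply_map]
  exact continuous_quot_mk.comp (continuous_const.prodMk continuous_id)

variable [IsTopologicalGroup G] [IsTopologicalGroup A]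

lemma isTopologicalGroup_centralProductTopology :
    @IsTopologicalGroup G (centralProductTopology ι hι) _ :=
  topologicalGroup_induced _

lemma t2Space_centralProductTopology (hgraph : IsClosed {p : G × A | p.1 = ι p.2}) :
    @T2Space G (centralProductTopology ι hι) :=
  have : IsClosed (((MonoidHom.id G).noncommCoprod ι hι).ker : Set (G × A)) := by
    convert hgraph.preimage (continuous_inv.prodMap continuous_id) using 1
    ext
    simp [inv_eq_iff_mul_eq_one]
  @T2Space.of_injective_continuous _ _ (centralProductTopology ι hι) _ _ _
    (toCentralProduct_injective ι hι) continuous_induced_dom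

end MonoidHom

lemma MonoidHom.isClosed_graph_of_continuous_ofInjective_symm {G A : Type*} [Group G] [Group A]
    [TopologicalSpace G] [TopologicalSpace A] [T2Space A] {ι : A →* G}
    (hinj : Function.Injective ι) (hrange : IsClosed (ι.range : Set G))
    (hcont : Continuous (ofInjective hinj).symm) :
    IsClosed {p : G × A | p.1 = ι p.2} := by
  have hemb := hrange.isClosedEmbedding_subtypeVal.prodMap (IsClosedEmbedding.id (X := A))
  convert hemb.isClosedMap _ (isClosed_eq (hcont.comp continuous_fst) continuous_snd) using 1
  ext ⟨g, a⟩
  constructor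
  · rintro (rfl : g = ι a)
    exact ⟨(ofInjective hinj a, a), (ofInjective hinj).symm_apply_apply a, rfl⟩
  · rintro ⟨⟨r, b⟩, rfl : (ofInjective hinj).symm r = b, hr⟩
    obtain ⟨rfl, rfl⟩ := Prod.mk.inj hr
    exact (apply_ofInjective_symm hinj r).symm

lemma IsMinimalGroup.continuous_of_isClosed_graph {G A : Type*} [Group G] [Group A]
    [TopologicalSpace G] [IsTopologicalGroup G] [TopologicalSpace A] [IsTopologicalGroup A]
    (ι : A →* G) (hι : ∀ g a, Commute g (ι a)) (hmin : IsMinimalGroup ‹TopologicalSpace G›)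
    (hgraph : IsClosed {p : G × A | p.1 = ι p.2}) : Continuous ι := by
  have h := hmin _ (ι.le_centralProductTopology hι) (ι.isTopologicalGroup_centralProductTopology hι)
    (ι.t2Space_centralProductTopology hι hgraph)
  exact h ▸ ι.continuous_centralProductTopology hι

lemma IsMinimalGroup.subTop_of_isClosed_of_le_center {G : Type*} [Group G] [TopologicalSpace G]
    [IsTopologicalGroup G] (hmin : IsMinimalGroup ‹TopologicalSpace G›) {H : Subgroup G}
    (hH : IsClosed (H : Set G)) (hHZ : H ≤ Subgroup.center G) : IsMinimalGroup (subTop ‹_› H) := by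
  intro τ hle _ _
  have hinv : Continuous (MonoidHom.ofInjective H.subtype_injective).symm :=
    continuous_le_rng hle <| continuous_induced_rng.2 <|
      continuous_subtype_val.congr fun r => (MonoidHom.apply_ofInjective_symm _ r).symm
  have hcont : Continuous H.subtype :=
    hmin.continuous_of_isClosed_graph H.subtype
      (fun g a => Subgroup.mem_center_iff.1 (hHZ a.2) g)
      (MonoidHom.isClosed_graph_of_continuous_ofInjective_symm H.subtype_injective
        (by rwa [H.range_subtype]) hinv)
  exact le_antisymm (continuous_iff_le_induced.1 hcont) hle

/-- `G` is minimal iff its center is a minimal (in the subspace topology) key subgroup. -/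
theorem minimal_iff_center_minimal_key {G : Type*} [Group G] (γ : TopologicalSpace G)
    (hγ : @IsTopologicalGroup G γ _) (hT2 : @T2Space G γ) :
    IsMinimalGroup γ ↔
      IsMinimalGroup (subTop γ (Subgroup.center G)) ∧ IsKey γ (Subgroup.center G) := by
  refine ⟨fun hmin => ⟨?_, fun γ₁ hle htg ht2 _ => hmin γ₁ hle htg ht2⟩, ?_⟩
  · refine hmin.subTop_of_isClosed_of_le_center ?_ le_rfl
    rw [Subgroup.coe_center, ← Set.centralizer_univ]
    exact Set.isClosed_centralizer _
  · rintro ⟨hZmin, hkey⟩ γ₁ hle htg ht2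
    exact hkey γ₁ hle htg ht2 <| hZmin _ (induced_mono hle)
      (@Subgroup.instIsTopologicalGroupSubtypeMem G γ₁ _ htg _) (@instT2SpaceSubtype G γ₁ _ ht2)
end

section
/- A subgroup H of a Hausdorff topological group G is a key subgroup if and only if its closure cl(H) is a key subgroup of G. -/
open Topology

theorem subTop_eq_induced_inclusion {G : Type*} [Group G] (t : TopologicalSpace G)
    {H K : Subgroup G} (hHK : H ≤ K) :
    subTop t H = (subTop t K).induced (Subgroup.inclusion hHK) := by
  rw [subTop, subTop, induced_compose]
  rfl

theorem subTop_eq_of_le {G : Type*} [Group G] {t t' : TopologicalSpace G}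
    {H K : Subgroup G} (hHK : H ≤ K) (h : subTop t K = subTop t' K) :
    subTop t H = subTop t' H := by
  rw [subTop_eq_induced_inclusion t hHK, subTop_eq_induced_inclusion t' hHK, h]

theorem nhds_one_subTop {G : Type*} [Group G] (t : TopologicalSpace G) (H : Subgroup G) :
    @nhds H (subTop t H) 1 = Filter.comap ((↑) : H → G) (@nhds G t 1) :=
  @nhds_induced G H t _ 1

theorem isTopologicalGroup_subTop {G : Type*} [Group G] {t : TopologicalSpace G}
    (ht : @IsTopologicalGroup G t _) (H : Subgroup G) :
    @IsTopologicalGroup H (subTop t H) _ :=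
  @topologicalGroup_induced G H t _ ht _ _ _ _ H.subtype

/- A closed `t`-neighbourhood `V` of `1` is cut out on `H` by a `t₁`-open set `O`; as `O` is
also `t`-open, `O ∩ closure H ⊆ closure (O ∩ H) ⊆ V`.
`t₁` is bound before `t` so that instance search (closure, `nhds`) resolves to `t`. -/
theorem subTop_topologicalClosure_eq {G : Type*} [Group G] {t₁ : TopologicalSpace G}
    (ht₁ : @IsTopologicalGroup G t₁ _) [t : TopologicalSpace G] [IsTopologicalGroup G]
    (hle : t ≤ t₁) {H : Subgroup G} (h : subTop t₁ H = subTop t H) :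
    subTop t₁ H.topologicalClosure = subTop t H.topologicalClosure := by
  refine (isTopologicalGroup_subTop ht₁ _).ext (isTopologicalGroup_subTop ‹_› _) ?_
  rw [nhds_one_subTop, nhds_one_subTop]
  refine le_antisymm (fun s hs => ?_) (Filter.comap_mono (nhds_mono hle))
  obtain ⟨U, hU, hUs⟩ := Filter.mem_comap.1 hs
  obtain ⟨V, hV, hVc, hVU⟩ := exists_mem_nhds_isClosed_subset hU
  have hVH : ((↑) : H → G) ⁻¹' V ∈ Filter.comap ((↑) : H → G) (@nhds G t₁ 1) := by
    rw [← nhds_one_subTop, h, nhds_one_subTop]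
    exact Filter.preimage_mem_comap hV
  obtain ⟨W, hW, hWV⟩ := Filter.mem_comap.1 hVH
  set O := @interior G t₁ W
  have hO : IsOpen O := (@isOpen_interior G t₁ W).mono hle
  have hOH : O ∩ H ⊆ V := by
    rintro g ⟨hgO, hgH⟩
    exact hWV (show ((⟨g, hgH⟩ : H) : G) ∈ W from @interior_subset G t₁ W g hgO)
  refine Filter.mem_comap.2 ⟨O, @interior_mem_nhds G t₁ _ _ |>.2 hW, fun x hx => hUs ?_⟩
  exact hVU (hVc.closure_subset (closure_mono hOH (hO.inter_closure ⟨hx, x.2⟩)))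

theorem IsKey.mono {G : Type*} [Group G] {γ : TopologicalSpace G} {H K : Subgroup G}
    (hH : IsKey γ H) (hHK : H ≤ K) : IsKey γ K :=
  fun γ₁ hle tg₁ t2 hK => hH γ₁ hle tg₁ t2 (subTop_eq_of_le hHK hK)

theorem IsKey.of_topologicalClosure {G : Type*} [Group G] [γ : TopologicalSpace G]
    [IsTopologicalGroup G] {H : Subgroup G} (hH : IsKey γ H.topologicalClosure) : IsKey γ H :=
  fun γ₁ hle tg₁ t2 hsub => hH γ₁ hle tg₁ t2
    (subTop_topologicalClosure_eq tg₁ (t := γ) hle hsub)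

theorem isKey_iff_closure_isKey_general {G : Type*} [Group G] [γ : TopologicalSpace G]
    [IsTopologicalGroup G] (H : Subgroup G) :
    IsKey γ H ↔ IsKey γ H.topologicalClosure :=
  ⟨fun hH => hH.mono H.le_topologicalClosure, IsKey.of_topologicalClosure⟩

/-- `H` is a key subgroup of `G` iff its closure is a key subgroup of `G`. -/
theorem isKey_iff_closure_isKey {G : Type*} [Group G] [γ : TopologicalSpace G]
    [IsTopologicalGroup G] [T2Space G] (H : Subgroup G) :
    IsKey γ H ↔ IsKey γ H.topologicalClosure :=
  isKey_iff_closure_isKey_general (γ := γ) H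
end

section
/- Let G ≤ H be subgroups of a Hausdorff topological group X. If H is a co-key subgroup of X, then G is a co-key subgroup of X. -/
open Topology

theorem quotTop_eq_coinduced_quotientMapOfLE {G : Type*} [Group G] (t : TopologicalSpace G)
    {H K : Subgroup G} (h : H ≤ K) :
    quotTop t K = (quotTop t H).coinduced (Subgroup.quotientMapOfLE h) :=
  rfl

theorem quotTop_congr_of_le {G : Type*} [Group G] {t₁ t₂ : TopologicalSpace G}
    {H K : Subgroup G} (h : H ≤ K) (heq : quotTop t₁ H = quotTop t₂ H) :
    quotTop t₁ K = quotTop t₂ K := by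
  rw [quotTop_eq_coinduced_quotientMapOfLE t₁ h, quotTop_eq_coinduced_quotientMapOfLE t₂ h, heq]

theorem isCoKey_of_le_general {X : Type*} [Group X] (τ : TopologicalSpace X)
    (A B : Subgroup X) (hle : A ≤ B) (h : IsCoKey τ B) :
    IsCoKey τ A :=
  fun γ₁ hγ₁ hgrp hT2 hquot => h γ₁ hγ₁ hgrp hT2 (quotTop_congr_of_le hle hquot)

/-- The co-key property passes down to smaller subgroups: if `A ≤ B` are subgroups of `X`
and `B` is co-key in `X`, then `A` is co-key in `X`. -/
theorem isCoKey_of_le {X : Type*} [Group X] (τ : TopologicalSpace X)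
    (hτ : @IsTopologicalGroup X τ _) (hT2 : @T2Space X τ)
    (A B : Subgroup X) (hle : A ≤ B) (h : IsCoKey τ B) :
    IsCoKey τ A :=
  isCoKey_of_le_general τ A B hle h
end

section
/- Let G ≤ H be subgroups of a Hausdorff topological group X. If G is a co-key subgroup of H (with its subspace topology), then G is a co-key subgroup of X. -/
open Topology

/-! By Merson's lemma it suffices that a coarser Hausdorff group topology `σ` with `σ/A = τ/A`
agrees with `τ` on `B` and on `X/B`. The quotient `X/B` is a quotient of `X/A`. On the other side,
`(σ|_B)/A` is the subspace topology of the image of `B` in `σ/A = τ/A`, hence equals `(τ|_B)/A`,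
and then `σ|_B = τ|_B` because `A` is co-key in `B`. -/

open Pointwise

section Merson

variable {X : Type*} [Group X] {σ τ : TopologicalSpace X} {H : Subgroup X}

theorem isOpen_mul_subgroup_of_quotTop_eq_s11 [@SeparatelyContinuousMul X τ _]
    (hq : quotTop σ H = quotTop τ H) {T : Set X} (hT : IsOpen[τ] T) :
    IsOpen[σ] (T * H) := by
  have hT' : IsOpen[quotTop τ H] ((↑) '' T : Set (X ⧸ H)) :=
    @QuotientGroup.isOpenMap_coe X τ _ _ H T hT
  rw [← hq] at hT'
  rw [← QuotientGroup.preimage_image_mk_eq_mul]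
  exact hT'

theorem exists_nhds_inter_subset_of_subTop_eq (hs : subTop σ H = subTop τ H) {V : Set X}
    (hV : V ∈ @nhds X τ 1) : ∃ O ∈ @nhds X σ 1, O ∩ H ⊆ V := by
  have hcomap : Filter.comap ((↑) : H → X) (@nhds X σ 1) =
      Filter.comap ((↑) : H → X) (@nhds X τ 1) :=
    (@nhds_induced X H σ (↑) 1).symm.trans <|
      (congrArg (fun t => @nhds H t 1) hs).trans (@nhds_induced X H τ (↑) 1)
  obtain ⟨O, hO, hOV⟩ := Filter.mem_comap.1 (hcomap ▸ Filter.preimage_mem_comap hV)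
  exact ⟨O, hO, fun x ⟨hxO, hxH⟩ => hOV (a := ⟨x, hxH⟩) hxO⟩

/-- Merson's lemma. -/
theorem eq_of_subTop_eq_of_quotTop_eq [hσ : @IsTopologicalGroup X σ _]
    [hτ : @IsTopologicalGroup X τ _] (hle : τ ≤ σ) (hs : subTop σ H = subTop τ H)
    (hq : quotTop σ H = quotTop τ H) : σ = τ := by
  refine IsTopologicalGroup.ext hσ hτ (le_antisymm (fun U hU => ?_) (nhds_mono hle))
  obtain ⟨V, hVo, hV1, hVU⟩ := @exists_open_nhds_one_mul_subset X τ _ _ U hU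
  obtain ⟨O, hO, hOV⟩ :=
    exists_nhds_inter_subset_of_subTop_eq hs (@IsOpen.mem_nhds X τ _ _ hVo hV1)
  obtain ⟨O₁, hO₁o, hO₁1, hO₁O⟩ := @exists_open_nhds_one_split X σ _ _ O hO
  have hW : IsOpen[σ] ((V ∩ O₁⁻¹) * H) :=
    isOpen_mul_subgroup_of_quotTop_eq_s11 hq (hVo.inter ((@IsOpen.inv X σ _ _ _ hO₁o).mono hle))
  have hW1 : (1 : X) ∈ (V ∩ O₁⁻¹) * H :=
    ⟨1, ⟨hV1, by simpa using hO₁1⟩, 1, H.one_mem, one_mul 1⟩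
  refine Filter.mem_of_superset (Filter.inter_mem (@IsOpen.mem_nhds X σ _ _ hW hW1)
    (@IsOpen.mem_nhds X σ _ _ hO₁o hO₁1)) ?_
  -- `x = t * h` with `t ∈ V`, and `h = t⁻¹ * x ∈ O₁ * O₁ ∩ H ⊆ V`, so `x ∈ V * V ⊆ U`
  rintro _ ⟨⟨t, ⟨htV, htO₁⟩, h, hh, rfl⟩, hx⟩
  have hhO : h ∈ O := by simpa using hO₁O t⁻¹ htO₁ (t * h) hx
  exact hVU (Set.mul_mem_mul htV (hOV ⟨hhO, hh⟩))

end Merson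

section QuotientOfSubgroup

variable {X : Type*} [Group X] (A B : Subgroup X)

def quotientSubgroupOfInclusion : B ⧸ A.subgroupOf B → X ⧸ A :=
  Quotient.map' Subtype.val fun a b hab => by
    simpa [QuotientGroup.leftRel_apply, Subgroup.mem_subgroupOf] using hab

theorem quotientSubgroupOfInclusion_mk (b : B) :
    quotientSubgroupOfInclusion A B (b : B ⧸ A.subgroupOf B) = ((b : X) : X ⧸ A) :=
  rfl

variable {A B}

theorem quotTop_subTop_le_induced (γ : TopologicalSpace X) :
    quotTop (subTop γ B) (A.subgroupOf B) ≤
      (quotTop γ A).induced (quotientSubgroupOfInclusion A B) := by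
  rw [← continuous_iff_le_induced, quotTop, continuous_coinduced_dom]
  exact (@continuous_coinduced_rng X (X ⧸ A) QuotientGroup.mk γ).comp continuous_induced_dom

theorem quotTop_subTop_eq_induced (γ : TopologicalSpace X) [@SeparatelyContinuousMul X γ _]
    (hAB : A ≤ B) :
    quotTop (subTop γ B) (A.subgroupOf B) =
      (quotTop γ A).induced (quotientSubgroupOfInclusion A B) := by
  refine le_antisymm (quotTop_subTop_le_induced γ) fun S hS => ?_
  obtain ⟨W, hWo, hWS⟩ := isOpen_induced_iff.1 (isOpen_coinduced.1 hS)
  refine isOpen_induced_iff.2 ⟨_, @QuotientGroup.isOpenMap_coe X γ _ _ A W hWo, ?_⟩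
  ext x
  induction x using QuotientGroup.induction_on with | H b => ?_
  rw [Set.mem_preimage, quotientSubgroupOfInclusion_mk, ← Set.mem_preimage,
    QuotientGroup.preimage_image_mk_eq_mul]
  constructor
  · rintro ⟨w, hw, a, ha, hwa⟩
    have hwB : w ∈ B := by
      simpa [← hwa] using B.mul_mem b.2 (B.inv_mem (hAB ha))
    have hwS : (⟨w, hwB⟩ : B) ∈ QuotientGroup.mk ⁻¹' S := by rwa [← hWS]
    have hwb : ((⟨w, hwB⟩ : B) : B ⧸ A.subgroupOf B) = b :=
      QuotientGroup.eq.2 (by simpa [Subgroup.mem_subgroupOf, ← hwa] using ha)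
    rwa [Set.mem_preimage, hwb] at hwS
  · intro hb
    have hbW : b ∈ (↑) ⁻¹' W := by rwa [hWS]
    exact ⟨b, hbW, 1, A.one_mem, mul_one _⟩

theorem quotTop_eq_coinduced_quotientMapOfLE_s11 (γ : TopologicalSpace X) (hAB : A ≤ B) :
    quotTop γ B = (quotTop γ A).coinduced (Subgroup.quotientMapOfLE hAB) := by
  rw [quotTop, quotTop, coinduced_compose]
  rfl

end QuotientOfSubgroup

theorem isCoKey_of_isCoKey_subgroup_general {X : Type*} [Group X] (τ : TopologicalSpace X)
    (hτ : @IsTopologicalGroup X τ _)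
    (A B : Subgroup X) (hle : A ≤ B)
    (h : IsCoKey (subTop τ B) (A.subgroupOf B)) :
    IsCoKey τ A := by
  intro σ hτσ hσ hσT2 hq
  have hsub : subTop σ B = subTop τ B := by
    refine h _ (induced_mono hτσ) (inferInstanceAs (IsTopologicalGroup B))
      (inferInstanceAs (T2Space B)) ?_
    rw [quotTop_subTop_eq_induced σ hle, quotTop_subTop_eq_induced τ hle, hq]
  have hquot : quotTop σ B = quotTop τ B := by
    rw [quotTop_eq_coinduced_quotientMapOfLE_s11 σ hle,
      quotTop_eq_coinduced_quotientMapOfLE_s11 τ hle, hq]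
  exact eq_of_subTop_eq_of_quotTop_eq hτσ hsub hquot

/-- If `A ≤ B` are subgroups of `X` and `A` is co-key in `B` (with the subspace topology),
then `A` is co-key in `X`. -/
theorem isCoKey_of_isCoKey_subgroup {X : Type*} [Group X] (τ : TopologicalSpace X)
    (hτ : @IsTopologicalGroup X τ _) (hT2 : @T2Space X τ)
    (A B : Subgroup X) (hle : A ≤ B)
    (h : IsCoKey (subTop τ B) (A.subgroupOf B)) :
    IsCoKey τ A :=
  isCoKey_of_isCoKey_subgroup_general τ hτ A B hle h
end

section
/- Let H be a Raikov complete subgroup of a Hausdorff topological group G such that the coset space G/H is compact Hausdorff. Then H is a key subgroup of G. -/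
/-!
Let `γ₁` be a coarser Hausdorff group topology inducing the same topology on `H`. Raikov
completeness is intrinsic to `H`, so `H` is `γ₁`-closed and `G ⧸ H` is Hausdorff for `γ₁`; the
identity from the compact space `(G ⧸ H, γ)` onto it is then a homeomorphism. Thus `γ₁` and `γ`
agree both on `H` and on `G ⧸ H`, and Merson's lemma (comparable group topologies agreeing on a
subgroup and on its coset space coincide) gives `γ₁ = γ`.
-/

open Topology

/-- The two-sided (Raikov) uniformity filter of a group topology. -/
def twoSidedUniformity {X : Type*} [Group X] (t : TopologicalSpace X) : Filter (X × X) :=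
  Filter.comap (fun p : X × X => p.2 / p.1) (@nhds X t 1) ⊓
    Filter.comap (fun p : X × X => p.1⁻¹ * p.2) (@nhds X t 1)

/-- Raikov completeness: every Cauchy filter with respect to the two-sided uniformity
converges. -/
def RaikovComplete {X : Type*} [Group X] (t : TopologicalSpace X) : Prop :=
  ∀ f : Filter X, f.NeBot → f ×ˢ f ≤ twoSidedUniformity t → ∃ x, f ≤ @nhds X t x

open Filter Set
open scoped Pointwise

section Raikov

variable {G : Type*} [Group G]

theorem twoSidedUniformity_subTop (t : TopologicalSpace G) (H : Subgroup G) :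
    twoSidedUniformity (subTop t H) =
      comap (Prod.map ((↑) : H → G) ((↑) : H → G)) (twoSidedUniformity t) := by
  unfold twoSidedUniformity subTop
  rw [nhds_induced, comap_inf]
  simp only [comap_comap]
  rfl

theorem nhds_prod_nhds_le_twoSidedUniformity [TopologicalSpace G] [IsTopologicalGroup G]
    (x : G) : 𝓝 x ×ˢ 𝓝 x ≤ twoSidedUniformity ‹_› := by
  rw [← nhds_prod_eq]
  refine le_inf (Tendsto.le_comap ?_) (Tendsto.le_comap ?_)
  · exact (continuous_snd.div' continuous_fst).tendsto' (x, x) 1 (div_self' x)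
  · exact (continuous_fst.inv.mul continuous_snd).tendsto' (x, x) 1 (inv_mul_cancel x)

theorem isClosed_of_raikovComplete [TopologicalSpace G] [IsTopologicalGroup G] [T2Space G]
    {H : Subgroup G} (hR : RaikovComplete (subTop ‹_› H)) : IsClosed (H : Set G) := by
  refine closure_subset_iff_isClosed.1 fun x hx => ?_
  set f : Filter H := comap (↑) (𝓝 x)
  have hf : f.NeBot := mem_closure_iff_comap_neBot.1 hx
  have hcauchy : f ×ˢ f ≤ twoSidedUniformity (subTop ‹_› H) := by
    rw [twoSidedUniformity_subTop, prod_comap_comap_eq]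
    exact comap_mono (nhds_prod_nhds_le_twoSidedUniformity x)
  obtain ⟨h, hfh⟩ := hR f hf hcauchy
  have hlim_x : Tendsto ((↑) : H → G) f (𝓝 x) := tendsto_comap
  have hlim_h : Tendsto ((↑) : H → G) f (𝓝 h) :=
    continuous_subtype_val.tendsto h |>.mono_left hfh
  exact tendsto_nhds_unique hlim_x hlim_h ▸ h.2

end Raikov

theorem TopologicalSpace.eq_of_le_of_compactSpace_of_t2Space {X : Type*}
    {t t' : TopologicalSpace X} (h : t ≤ t') (hc : @CompactSpace X t) (h2 : @T2Space X t') :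
    t' = t := by
  refine le_antisymm (fun U hU => ?_) h
  have hclosed : IsClosed[t'] (id '' Uᶜ) :=
    @Continuous.isClosedMap X X t t' hc h2 id (continuous_id_of_le h) Uᶜ
      (@IsOpen.isClosed_compl X t U hU)
  rw [image_id] at hclosed
  exact @isClosed_compl_iff X t' U |>.1 hclosed

section Merson

variable {G : Type*} [Group G] {t' : TopologicalSpace G} [τ : TopologicalSpace G]
  [IsTopologicalGroup G] {H : Subgroup G}

theorem isOpen_mul_subgroup_of_quotTop_eq_s12 (hq : quotTop t' H = quotTop τ H) {S : Set G}
    (hS : IsOpen S) : IsOpen[t'] (S * (H : Set G)) := by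
  rw [← QuotientGroup.preimage_image_mk_eq_mul]
  change IsOpen[quotTop t' H] _
  rw [hq]
  exact QuotientGroup.isOpenMap_coe S hS

theorem eq_of_subTop_eq_of_quotTop_eq_s12 (ht' : @IsTopologicalGroup G t' _) (hle : τ ≤ t')
    (hsub : subTop t' H = subTop τ H) (hquot : quotTop t' H = quotTop τ H) : t' = τ := by
  refine ht'.ext inferInstance (le_antisymm (fun U hU => ?_) (nhds_mono hle))
  obtain ⟨V, hV, hVU⟩ := exists_nhds_one_split hU
  have hnhdsH : comap ((↑) : H → G) (@nhds G t' 1) = comap ((↑) : H → G) (𝓝 1) := by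
    have := congrArg (@nhds H · 1) hsub
    rw [subTop, subTop, @nhds_induced G H t', nhds_induced] at this
    exact this
  obtain ⟨W, hW, hWV⟩ := mem_comap.1 (hnhdsH ▸ preimage_mem_comap hV)
  obtain ⟨W', hW', hW'W⟩ : ∃ W' ∈ @nhds G t' 1, ∀ a ∈ W', ∀ b ∈ W', a⁻¹ * b ∈ W := by
    let _ : TopologicalSpace G := t'
    have hcont : Tendsto (fun p : G × G => p.1⁻¹ * p.2) (𝓝 1 ×ˢ 𝓝 1) (𝓝 1) := by
      rw [← nhds_prod_eq]
      exact (continuous_fst.inv.mul continuous_snd).tendsto' _ _ (inv_mul_cancel 1)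
    obtain ⟨W', hW', hW'W⟩ := mem_prod_self_iff.1 (hcont hW)
    exact ⟨W', hW', fun a ha b hb => hW'W (mk_mem_prod ha hb)⟩
  obtain ⟨S, hSVW, hS, hS1⟩ := mem_nhds_iff.1 (inter_mem hV (nhds_mono hle hW'))
  have hSH : S * (H : Set G) ∈ @nhds G t' 1 :=
    @IsOpen.mem_nhds G t' _ _ (isOpen_mul_subgroup_of_quotTop_eq_s12 hquot hS)
      ⟨1, hS1, 1, H.one_mem, one_mul 1⟩
  filter_upwards [hW', hSH]
  -- `s` is small for both topologies, so `h = s⁻¹ * x` is `t'`-small, hence `τ`-small as `h ∈ H`.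
  rintro x hx ⟨s, hs, h, hh, rfl⟩
  have hhW : h ∈ W := by simpa using hW'W s (hSVW hs).2 _ hx
  exact hVU s (hSVW hs).1 h (hWV (show (⟨h, hh⟩ : H) ∈ (↑) ⁻¹' W from hhW))

end Merson

theorem isKey_of_raikovComplete_cocompact_general {G : Type*} [Group G] (γ : TopologicalSpace G)
    (hγ : @IsTopologicalGroup G γ _)
    (H : Subgroup G) (hR : RaikovComplete (subTop γ H))
    (hcomp : @CompactSpace (G ⧸ H) (quotTop γ H)) :
    IsKey γ H := by
  intro γ₁ hle hγ₁ hT2₁ hsub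
  have hclosed : IsClosed[γ₁] (H : Set G) :=
    @isClosed_of_raikovComplete G _ γ₁ hγ₁ hT2₁ H (hsub ▸ hR)
  have hquot : quotTop γ₁ H = quotTop γ H :=
    TopologicalSpace.eq_of_le_of_compactSpace_of_t2Space (coinduced_mono hle) hcomp
      (@QuotientGroup.instT2Space G _ γ₁ hγ₁ H hclosed)
  exact @eq_of_subTop_eq_of_quotTop_eq_s12 G _ γ₁ γ hγ H hγ₁ hle hsub hquot

/-- A Raikov complete co-compact subgroup is a key subgroup. -/
theorem isKey_of_raikovComplete_cocompact {G : Type*} [Group G] (γ : TopologicalSpace G)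
    (hγ : @IsTopologicalGroup G γ _) (hT2 : @T2Space G γ)
    (H : Subgroup G) (hR : RaikovComplete (subTop γ H))
    (hcomp : @CompactSpace (G ⧸ H) (quotTop γ H))
    (hq2 : @T2Space (G ⧸ H) (quotTop γ H)) :
    IsKey γ H :=
  isKey_of_raikovComplete_cocompact_general γ hγ H hR hcomp
end

section
/- Every nontrivial subgroup of the additive group of real numbers (with the usual topology) is a key subgroup of ℝ. -/
open Topology

/-- Subspace topology induced on an additive subgroup. -/
def subTopAdd {G : Type*} [AddGroup G] (t : TopologicalSpace G) (H : AddSubgroup G) :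
    TopologicalSpace H :=
  t.induced ((↑) : H → G)

/-- `H` is a key subgroup of the additive topological group `(G, γ)`. -/
def IsKeyAdd {G : Type*} [AddGroup G] (γ : TopologicalSpace G) (H : AddSubgroup G) : Prop :=
  ∀ γ₁ : TopologicalSpace G, γ ≤ γ₁ → @IsTopologicalAddGroup G γ₁ _ → @T2Space G γ₁ →
    subTopAdd γ₁ H = subTopAdd γ H → γ₁ = γ

/-!
A nontrivial subgroup `H` of `ℝ` is dense or equal to `aℤ` with `a ≠ 0`. Let `γ₁` be a coarser
Hausdorff group topology inducing the usual topology on `H`; it suffices that every usual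
neighbourhood `U` of `0` is a `γ₁`-neighbourhood.

If `H` is dense, pick a compact neighbourhood `K ⊆ U` and a `γ₁`-open `O` with
`O ∩ H = interior K ∩ H`. By density `O` lies in the `γ₁`-closure of `O ∩ H ⊆ K`, and `K` is
`γ₁`-compact, hence `γ₁`-closed; so `O ⊆ K ⊆ U`.

If `H = aℤ`, then `H` is `γ₁`-discrete, hence `γ₁`-closed, and some `γ₁`-neighbourhood `W` of `0`
contains no two points differing by a nonzero element of `H`. Take `K` compact with `K + H = ℝ`
and `V ⊆ U ∩ W` open around `0`. The set `(K \ (V + H)) + H` is `γ₁`-closed and misses `0`, and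
every point of `W` outside it is congruent mod `H`, hence equal, to a point of `V`.
-/

open Set Pointwise Filter

theorem IsCompact.mono_topology {X : Type*} {t t₁ : TopologicalSpace X} (hle : t ≤ t₁)
    {K : Set X} (hK : @IsCompact X t K) : @IsCompact X t₁ K := by
  simpa using @IsCompact.image X X t t₁ K id hK (continuous_id_of_le hle)

theorem Dense.nhds_le_map_of_isInducing_domRestrict {X Y : Type*} [TopologicalSpace X]
    [LocallyCompactSpace X] [TopologicalSpace Y] [T2Space Y] {f : X → Y} (hf : Continuous f)
    (hfd : DenseRange f) {s : Set X} (hs : Dense s) (hfs : IsInducing (s.domRestrict f))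
    {x : X} (hx : x ∈ s) : 𝓝 (f x) ≤ map f (𝓝 x) := by
  intro U hU
  obtain ⟨K, hKx, hKU, hK⟩ := local_compact_nhds hU
  obtain ⟨O, hO, hOI⟩ : ∃ O, IsOpen O ∧ s.domRestrict f ⁻¹' O = (↑) ⁻¹' interior K :=
    hfs.isOpen_iff.mp (isOpen_interior.preimage continuous_subtype_val)
  have hmemO (y : X) (hy : y ∈ s) : f y ∈ O ↔ y ∈ interior K := Set.ext_iff.mp hOI ⟨y, hy⟩
  have hOs : O ∩ f '' s ⊆ f '' K := by
    rintro _ ⟨hyO, y, hy, rfl⟩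
    exact ⟨y, interior_subset ((hmemO y hy).mp hyO), rfl⟩
  have hOK : O ⊆ f '' K :=
    (hfd.dense_image hf hs).open_subset_closure_inter hO |>.trans <|
      closure_minimal hOs (hK.image hf).isClosed
  exact mem_of_superset (hO.mem_nhds ((hmemO x hx).mpr (mem_interior_iff_mem_nhds.mpr hKx)))
    (hOK.trans (image_subset_iff.mpr hKU))

theorem AddSubgroup.exists_nhds_zero_sub_mem_imp_eq {G : Type*} [AddGroup G] [TopologicalSpace G]
    [IsTopologicalAddGroup G] (H : AddSubgroup G) [DiscreteTopology H] :
    ∃ W ∈ 𝓝 (0 : G), ∀ v ∈ W, ∀ w ∈ W, v - w ∈ H → v = w := by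
  obtain ⟨O, hO, hOH⟩ :=
    nhds_inter_eq_singleton_of_mem_discrete (isDiscrete_iff_discreteTopology.mpr ‹_›) H.zero_mem
  obtain ⟨W, hW, hWO⟩ := exists_nhds_half_neg hO
  refine ⟨W, hW, fun v hv w hw hvw => sub_eq_zero.mp ?_⟩
  have hvw' : v - w ∈ O ∩ H := ⟨hWO v hv w hw, hvw⟩
  rwa [hOH] at hvw'

theorem AddSubgroup.exists_nhds_zero_mem_nhds_of_isCompact_diff {G : Type*} [AddCommGroup G]
    [TopologicalSpace G] [IsTopologicalAddGroup G] [T2Space G] (H : AddSubgroup G)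
    [DiscreteTopology H] {K : Set G} (hKH : K + (H : Set G) = univ) :
    ∃ W ∈ 𝓝 (0 : G), ∀ V ⊆ W, 0 ∈ V → IsCompact (K \ (V + H)) → V ∈ 𝓝 0 := by
  obtain ⟨W, hW, hWH⟩ := H.exists_nhds_zero_sub_mem_imp_eq
  refine ⟨W, hW, fun V hVW hV0 hC => ?_⟩
  have hS : IsClosed (K \ (V + H) + (H : Set G)) :=
    H.isClosed_of_discrete.add_left_of_isCompact hC
  have h0S : (0 : G) ∉ K \ (V + H) + (H : Set G) := by
    rintro ⟨k, ⟨-, hkV⟩, h, hh, hkh⟩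
    exact hkV ⟨0, hV0, k, by simpa [eq_neg_of_add_eq_zero_left hkh] using hh, zero_add k⟩
  refine mem_of_superset (inter_mem hW (hS.isOpen_compl.mem_nhds h0S)) ?_
  rintro w ⟨hwW, hwS⟩
  obtain ⟨k, hk, h, hh, rfl⟩ := hKH ▸ mem_univ w
  obtain ⟨v, hv, h', hh', rfl⟩ : k ∈ V + H := by
    by_contra hkV
    exact hwS ⟨k, ⟨hk, hkV⟩, h, hh, rfl⟩
  rwa [hWH _ hwW v (hVW hv) (by simpa [add_assoc] using add_mem hh' hh)]

theorem IsTopologicalAddGroup.eq_of_le_of_nhds_zero_le {G : Type*} [AddGroup G]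
    {t t₁ : TopologicalSpace G} [@IsTopologicalAddGroup G t _] [@IsTopologicalAddGroup G t₁ _]
    (hle : t ≤ t₁) (h : @nhds G t₁ 0 ≤ @nhds G t 0) : t₁ = t :=
  IsTopologicalAddGroup.ext inferInstance inferInstance <| le_antisymm h (nhds_mono hle)

theorem isKeyAdd_of_dense {G : Type*} [AddGroup G] [t : TopologicalSpace G]
    [IsTopologicalAddGroup G] [LocallyCompactSpace G] {H : AddSubgroup G}
    (hH : Dense (H : Set G)) : IsKeyAdd t H := by
  intro γ₁ hle _ _ hHt
  refine IsTopologicalAddGroup.eq_of_le_of_nhds_zero_le hle ?_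
  simpa using @Dense.nhds_le_map_of_isInducing_domRestrict G G t _ γ₁ _ id
    (continuous_id_of_le hle) denseRange_id _ hH
    (@IsInducing.mk _ _ (@instTopologicalSpaceSubtype G _ t) γ₁ _ hHt.symm) 0 H.zero_mem

theorem isKeyAdd_of_discrete_of_add_eq_univ {G : Type*} [AddCommGroup G] [t : TopologicalSpace G]
    [IsTopologicalAddGroup G] {H : AddSubgroup G} [hd : DiscreteTopology H] {K : Set G}
    (hK : IsCompact K) (hKH : K + (H : Set G) = univ) : IsKeyAdd t H := by
  have hC (V : Set G) (hV : IsOpen V) : IsCompact (K \ (V + H)) := hK.diff hV.add_right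
  intro γ₁ hle _ _ hHt
  have : DiscreteTopology H := by
    have hd₁ : @DiscreteTopology H (subTopAdd t H) := hd
    rwa [← hHt] at hd₁
  obtain ⟨W, hW, hWV⟩ := H.exists_nhds_zero_mem_nhds_of_isCompact_diff hKH
  refine IsTopologicalAddGroup.eq_of_le_of_nhds_zero_le hle fun U hU => ?_
  obtain ⟨V, hVUW, hV, hV0⟩ := (@mem_nhds_iff G t _ _).mp (inter_mem hU (nhds_mono hle hW))
  exact mem_of_superset (hWV V (hVUW.trans inter_subset_right) hV0 ((hC V hV).mono_topology hle))
    (hVUW.trans inter_subset_left)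

theorem Real.closedBall_add_zmultiples_eq_univ {a : ℝ} (ha : a ≠ 0) :
    Metric.closedBall 0 |a| + (AddSubgroup.zmultiples a : Set ℝ) = univ := by
  refine eq_univ_of_forall fun x => ⟨Int.fract (x / a) * a, ?_, ⌊x / a⌋ • a,
    AddSubgroup.zsmul_mem_zmultiples a _, Int.fract_div_mul_self_add_zsmul_eq a x ha⟩
  rw [mem_closedBall_zero_iff, Real.norm_eq_abs, abs_mul, abs_of_nonneg (Int.fract_nonneg _)]
  exact mul_le_of_le_one_left (abs_nonneg a) (Int.fract_lt_one _).le

/-- Every nontrivial subgroup of `ℝ` (with the usual topology) is a key subgroup. -/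
theorem real_nontrivial_subgroup_isKey (H : AddSubgroup ℝ) (hH : H ≠ ⊥) :
    IsKeyAdd (inferInstance : TopologicalSpace ℝ) H := by
  rcases H.dense_or_cyclic with hd | ⟨a, rfl⟩
  · exact isKeyAdd_of_dense hd
  · rw [← AddSubgroup.zmultiples_eq_closure] at hH ⊢
    have ha : a ≠ 0 := by
      rintro rfl
      simp at hH
    exact isKeyAdd_of_discrete_of_add_eq_univ (isCompact_closedBall 0 |a|)
      (Real.closedBall_add_zmultiples_eq_univ ha)
end

section
/- A normal subgroup H of a Hausdorff topological group (G, τ) is a co-key subgroup of G if and only if H is relatively minimal in G. -/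
open Topology

open Pointwise

/-! A coarser group topology `γ` that agrees with `τ` both on `H` and on `G ⧸ H` is `τ` itself:
a `τ`-neighbourhood `V * V` of `1` contains a `γ`-neighbourhood `(V' * H) ∩ P₁`, where `P₁`
controls `H` through the subspace topology and `V' * H` is `γ`-open through the quotient topology.
Conversely, for normal `H` and a coarser Hausdorff group topology `γ`, the infimum of `γ` and the
pullback of `τ`'s quotient topology is a group topology between `τ` and `γ` with the quotient
topology of `τ`, hence equal to `τ` if `H` is co-key; the pullback is indiscrete on `H`, so this
topology induces on `H` the same topology as `γ`. -/

section

variable {G : Type*} [Group G] {τ γ : TopologicalSpace G} {H : Subgroup G}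

theorem comap_coe_nhds_one_eq_of_subTop_eq (h : subTop γ H = subTop τ H) :
    Filter.comap ((↑) : H → G) (@nhds G γ 1) = Filter.comap ((↑) : H → G) (@nhds G τ 1) := by
  unfold subTop at h
  simpa only [nhds_induced, OneMemClass.coe_one] using
    congrArg (fun t : TopologicalSpace H => @nhds H t 1) h

theorem isOpen_mul_subgroup_iff (t : TopologicalSpace G) (V : Set G) :
    IsOpen[t] (V * H) ↔ IsOpen[quotTop t H] ((QuotientGroup.mk : G → G ⧸ H) '' V) := by
  rw [← QuotientGroup.preimage_image_mk_eq_mul]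
  rfl

theorem mul_subgroup_mem_nhds_one_of_quotTop_eq (hτ : @IsTopologicalGroup G τ _)
    (h : quotTop γ H = quotTop τ H) {V : Set G} (hV : V ∈ @nhds G τ 1) :
    V * H ∈ @nhds G γ 1 := by
  let := τ
  have hopen : IsOpen[γ] (interior V * H) := by
    rw [isOpen_mul_subgroup_iff, h, ← isOpen_mul_subgroup_iff]
    exact isOpen_interior.mul_right
  refine Filter.mem_of_superset (@IsOpen.mem_nhds G γ _ _ hopen ?_) ?_
  · exact ⟨1, mem_interior_iff_mem_nhds.mpr hV, 1, H.one_mem, mul_one 1⟩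
  · exact Set.mul_subset_mul_right interior_subset

theorem eq_of_le_of_subTop_eq_of_quotTop_eq (hτ : @IsTopologicalGroup G τ _)
    (hγ : @IsTopologicalGroup G γ _) (hle : τ ≤ γ) (hsub : subTop γ H = subTop τ H)
    (hquot : quotTop γ H = quotTop τ H) : γ = τ := by
  refine IsTopologicalGroup.ext hγ hτ (le_antisymm (fun U hU => ?_) (nhds_mono hle))
  obtain ⟨V, hV, hVU⟩ := @exists_nhds_one_split G τ _ _ U hU
  obtain ⟨P, hP, hPV⟩ : ∃ P ∈ @nhds G γ 1, ((↑) : H → G) ⁻¹' P ⊆ (↑) ⁻¹' V := by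
    rw [← Filter.mem_comap, comap_coe_nhds_one_eq_of_subTop_eq hsub]
    exact Filter.preimage_mem_comap hV
  obtain ⟨P₁, hP₁, -, hP₁inv, hP₁P⟩ :=
    @exists_closed_nhds_one_inv_eq_mul_subset G γ _ hγ P hP
  have hV' : V ∩ P₁ ∈ @nhds G τ 1 := Filter.inter_mem hV (nhds_mono hle hP₁)
  filter_upwards [mul_subgroup_mem_nhds_one_of_quotTop_eq hτ hquot hV', hP₁]
  rintro _ ⟨a, ⟨haV, haP₁⟩, h, hh, rfl⟩ hahP₁
  -- `h = a⁻¹ * (a * h)` lies in `P₁⁻¹ * P₁ ⊆ P`, and `P` meets `H` inside `V`.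
  have hhP : h ∈ P := hP₁P <| by
    simpa using Set.mul_mem_mul (hP₁inv.symm ▸ Set.inv_mem_inv.mpr haP₁ : a⁻¹ ∈ P₁) hahP₁
  exact hVU a haV h (hPV (a := ⟨h, hh⟩) hhP)

theorem isCoKey_of_isRelMin (hτ : @IsTopologicalGroup G τ _) (h : IsRelMin τ H) :
    IsCoKey τ H := fun γ hle hγ hT2 hquot =>
  eq_of_le_of_subTop_eq_of_quotTop_eq hτ hγ hle (h γ hle hγ hT2) hquot

theorem subTop_inf_induced_mk (t : TopologicalSpace G) (s : TopologicalSpace (G ⧸ H)) :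
    subTop (t ⊓ s.induced QuotientGroup.mk) H = subTop t H := by
  have hconst : (QuotientGroup.mk : G → G ⧸ H) ∘ ((↑) : H → G) = fun _ => ((1 : G) : G ⧸ H) :=
    funext fun h => QuotientGroup.eq.mpr (by simp)
  rw [subTop, induced_inf, induced_compose, hconst, induced_const, inf_top_eq]
  rfl

theorem isRelMin_of_isCoKey (hτ : @IsTopologicalGroup G τ _) [H.Normal] (h : IsCoKey τ H) :
    IsRelMin τ H := by
  intro γ hle hγ hT2
  let q : TopologicalSpace (G ⧸ H) := quotTop τ H
  have hq : @IsTopologicalGroup (G ⧸ H) q _ := @QuotientGroup.instIsTopologicalGroup G τ _ hτ H _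
  have hρ : @IsTopologicalGroup G (γ ⊓ q.induced QuotientGroup.mk) _ :=
    topologicalGroup_inf hγ (topologicalGroup_induced (QuotientGroup.mk' H))
  have hle' : τ ≤ γ ⊓ q.induced QuotientGroup.mk :=
    le_inf hle (coinduced_le_iff_le_induced.1 le_rfl)
  have hquot : quotTop (γ ⊓ q.induced QuotientGroup.mk) H = quotTop τ H :=
    le_antisymm (coinduced_le_iff_le_induced.2 inf_le_right) (coinduced_mono hle')
  rw [← subTop_inf_induced_mk γ q, h _ hle' hρ (t2Space_antitone inf_le_left hT2) hquot]

end

theorem normal_isCoKey_iff_isRelMin_general {G : Type*} [Group G] (τ : TopologicalSpace G)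
    (hτ : @IsTopologicalGroup G τ _)
    (H : Subgroup G) (hn : H.Normal) :
    IsCoKey τ H ↔ IsRelMin τ H :=
  ⟨isRelMin_of_isCoKey hτ, isCoKey_of_isRelMin hτ⟩

/-- A normal subgroup is co-key iff it is relatively minimal. -/
theorem normal_isCoKey_iff_isRelMin {G : Type*} [Group G] (τ : TopologicalSpace G)
    (hτ : @IsTopologicalGroup G τ _) (hT2 : @T2Space G τ)
    (H : Subgroup G) (hn : H.Normal) :
    IsCoKey τ H ↔ IsRelMin τ H :=
  normal_isCoKey_iff_isRelMin_general τ hτ H hn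
end
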